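/- Assume V₀ < d₀²/4, let X be the unique solution of X = V(A + X) with ‖X‖ ≤ r_min, and set H₁ = A + X. Then for every z ∈ ℂ with dist(z, σ(A)) ≤ d₀/2 the operator W(z) = I − ∫₀¹ γ'(t) (γ(t) − z)⁻¹ · K(γ(t)) ∘ (H₁ − γ(t))⁻¹ dt is boundedly invertible on H. -/

import Mathlib

open MeasureTheory Metric Set

noncomputable section

variable {H : Type*} [NormedAddCommGroup H] [InnerProductSpace ℂ H] [CompleteSpace H]

/-- `d₀ = inf_{t ∈ [0,1]} dist (γ t, σ(A))`. -/
noncomputable def curveDist (A : H →L[ℂ] H) (γ : ℝ → ℂ) : ℝ :=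
  ⨅ t : Set.Icc (0 : ℝ) 1, Metric.infDist (γ t) (spectrum ℂ A)

/-- `V₀ = ∫₀¹ |γ'(t)| ‖K(γ(t))‖ dt`. -/
noncomputable def curveVar (K : ℂ → H →L[ℂ] H) (γ : ℝ → ℂ) : ℝ :=
  ∫ t in (0:ℝ)..1, ‖derivWithin γ (Set.Icc 0 1) t‖ * ‖K (γ t)‖

/-- `V(Y) = ∫₀¹ γ'(t) • K(γ(t)) ∘ (Y − γ(t))⁻¹ dt` (Bochner integral in `B(H)`). -/
noncomputable def Vmap (K : ℂ → H →L[ℂ] H) (γ : ℝ → ℂ) (Y : H →L[ℂ] H) : H →L[ℂ] H :=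
  ∫ t in (0:ℝ)..1, derivWithin γ (Set.Icc 0 1) t •
    (K (γ t) ∘L Ring.inverse (Y - γ t • (1 : H →L[ℂ] H)))

/-- `r_min = d₀/2 − √(d₀²/4 − V₀)`. -/
noncomputable def rMin (A : H →L[ℂ] H) (K : ℂ → H →L[ℂ] H) (γ : ℝ → ℂ) : ℝ :=
  curveDist A γ / 2 - Real.sqrt ((curveDist A γ) ^ 2 / 4 - curveVar K γ)

/-- `V₁(z) = ∫₀¹ γ'(t) (z − γ(t))⁻¹ • K(γ(t)) dt`. -/
noncomputable def V1 (K : ℂ → H →L[ℂ] H) (γ : ℝ → ℂ) (z : ℂ) : H →L[ℂ] H :=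
  ∫ t in (0:ℝ)..1, (derivWithin γ (Set.Icc 0 1) t * (z - γ t)⁻¹) • K (γ t)

/-- The continued transfer function `M(z) = A − z + V₁(z)`. -/
noncomputable def Mfun (A : H →L[ℂ] H) (K : ℂ → H →L[ℂ] H) (γ : ℝ → ℂ) (z : ℂ) :
    H →L[ℂ] H :=
  A - z • (1 : H →L[ℂ] H) + V1 K γ z

/-- `W(z) = I − ∫₀¹ γ'(t) (γ(t) − z)⁻¹ • K(γ(t)) ∘ (H₁ − γ(t))⁻¹ dt`. -/
noncomputable def Wfun (K : ℂ → H →L[ℂ] H) (γ : ℝ → ℂ) (H₁ : H →L[ℂ] H) (z : ℂ) :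
    H →L[ℂ] H :=
  1 - ∫ t in (0:ℝ)..1, (derivWithin γ (Set.Icc 0 1) t * (γ t - z)⁻¹) •
    (K (γ t) ∘L Ring.inverse (H₁ - γ t • (1 : H →L[ℂ] H)))

/-! `W(z) = 1 - T(z)` with `‖T(z)‖ < 1`. On `Γ` the resolvent of the self-adjoint `A` has norm
at most `1/d₀`, so by a Neumann-series perturbation that of `H₁ = A + X` has norm at most
`1/(d₀ - r_min)`; moreover `|γ(t) - z| ≥ d₀/2`. Hence `‖T(z)‖ ≤ V₀ / ((d₀/2)(d₀ - r_min))`,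
and with `s = √(d₀²/4 - V₀)` we have
`V₀ = (d₀/2 - s)(d₀/2 + s) < (d₀/2)(d₀/2 + s) = (d₀/2)(d₀ - r_min)`. -/

theorem IsStarNormal.norm_ringInverse_sub_smul_one_le {𝒜 : Type*} [CStarAlgebra 𝒜] {a : 𝒜}
    [IsStarNormal a] {z : ℂ} (hz : z ∉ spectrum ℂ a) :
    ‖Ring.inverse (a - z • 1)‖ ≤ (infDist z (spectrum ℂ a))⁻¹ := by
  have hne : ∀ x ∈ spectrum ℂ a, x - z ≠ 0 := fun x hx h => hz (sub_eq_zero.mp h ▸ hx)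
  have hcfc : cfc (fun x => x - z) a = a - z • 1 := by
    rw [cfc_sub .., cfc_id' .., cfc_const .., Algebra.algebraMap_eq_smul_one]
  rw [← hcfc, ← cfc_inv (fun x => x - z) a hne]
  refine norm_cfc_le (inv_nonneg.mpr infDist_nonneg) fun x hx => ?_
  have hpos : 0 < infDist z (spectrum ℂ a) :=
    ((spectrum.isClosed a).notMem_iff_infDist_pos ⟨x, hx⟩).mp hz
  rw [norm_inv, ← dist_eq_norm, dist_comm]
  exact inv_anti₀ hpos (infDist_le_dist_of_mem hx)

theorem IsUnit.add_and_norm_ringInverse_add_le {R : Type*} [NormedRing R]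
    [HasSummableGeomSeries R] {a x : R} (ha : IsUnit a) {C r : ℝ} (hC : ‖Ring.inverse a‖ ≤ C)
    (hx : ‖x‖ ≤ r) (hCr : C * r < 1) :
    IsUnit (a + x) ∧ ‖Ring.inverse (a + x)‖ ≤ C / (1 - C * r) := by
  have hC0 : 0 ≤ C := (norm_nonneg _).trans hC
  have hax : ‖Ring.inverse a * x‖ ≤ C * r := (norm_mul_le _ _).trans (by gcongr)
  have hfac : a + x = a * (1 - -(Ring.inverse a * x)) := by
    rw [sub_neg_eq_add, mul_add, mul_one, ← mul_assoc, Ring.mul_inverse_cancel a ha, one_mul]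
  have hb : IsUnit (a + x) :=
    hfac ▸ ha.mul (isUnit_one_sub_of_norm_lt_one (by rw [norm_neg]; linarith))
  have hres :
      Ring.inverse (a + x) = Ring.inverse a - Ring.inverse a * x * Ring.inverse (a + x) := by
    rw [eq_sub_iff_add_eq, ← one_add_mul, ← Ring.inverse_mul_cancel a ha, ← mul_add, mul_assoc,
      Ring.mul_inverse_cancel _ hb, mul_one]
  refine ⟨hb, (le_div_iff₀ (by linarith)).mpr ?_⟩
  have hle : ‖Ring.inverse (a + x)‖ ≤ C + C * r * ‖Ring.inverse (a + x)‖ :=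
    calc ‖Ring.inverse (a + x)‖
        ≤ ‖Ring.inverse a‖ + ‖Ring.inverse a * x‖ * ‖Ring.inverse (a + x)‖ := by
          conv_lhs => rw [hres]
          exact (norm_sub_le _ _).trans (add_le_add_right (norm_mul_le _ _) _)
      _ ≤ C + C * r * ‖Ring.inverse (a + x)‖ := by gcongr
  linarith

theorem IsStarNormal.norm_ringInverse_add_sub_smul_one_le {𝒜 : Type*} [CStarAlgebra 𝒜]
    {a x : 𝒜} [IsStarNormal a] {z : ℂ} {d r : ℝ} (hdz : d ≤ infDist z (spectrum ℂ a))
    (hx : ‖x‖ ≤ r) (hrd : r < d) :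
    IsUnit (a + x - z • 1) ∧ ‖Ring.inverse (a + x - z • 1)‖ ≤ (d - r)⁻¹ := by
  have hd : 0 < d := (norm_nonneg x).trans_lt (hx.trans_lt hrd)
  have hz : z ∉ spectrum ℂ a := fun hz => (infDist_zero_of_mem hz ▸ hdz).not_gt hd
  have hunit : IsUnit (a - z • 1) := by
    simpa [Algebra.algebraMap_eq_smul_one] using (spectrum.notMem_iff.mp hz).neg
  have hC : ‖Ring.inverse (a - z • 1)‖ ≤ d⁻¹ :=
    (norm_ringInverse_sub_smul_one_le hz).trans (inv_anti₀ hd hdz)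
  have hCr : d⁻¹ * r < 1 := by rwa [inv_mul_lt_iff₀ hd, mul_one]
  rw [← sub_add_eq_add_sub]
  refine (hunit.add_and_norm_ringInverse_add_le hC hx hCr).imp_right fun h => h.trans_eq ?_
  field_simp

section Curve

variable {E : Type*} [NormedAddCommGroup E] [InnerProductSpace ℂ E]
  (A : E →L[ℂ] E) (K : ℂ → E →L[ℂ] E) (γ : ℝ → ℂ)

theorem curveDist_nonneg : 0 ≤ curveDist A γ :=
  Real.iInf_nonneg fun _ => infDist_nonneg

theorem curveDist_le_infDist {t : ℝ} (ht : t ∈ Icc (0 : ℝ) 1) :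
    curveDist A γ ≤ infDist (γ t) (spectrum ℂ A) :=
  ciInf_le ⟨0, by rintro _ ⟨u, rfl⟩; exact infDist_nonneg⟩ (⟨t, ht⟩ : Icc (0 : ℝ) 1)

theorem half_curveDist_le_norm_sub {z : ℂ} (hz : infDist z (spectrum ℂ A) ≤ curveDist A γ / 2)
    {t : ℝ} (ht : t ∈ Icc (0 : ℝ) 1) : curveDist A γ / 2 ≤ ‖γ t - z‖ := by
  have := infDist_le_infDist_add_dist (x := γ t) (y := z) (s := spectrum ℂ A)
  rw [dist_eq_norm] at this
  linarith [curveDist_le_infDist A γ ht]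

theorem curveVar_nonneg : 0 ≤ curveVar K γ :=
  intervalIntegral.integral_nonneg zero_le_one fun _ _ => by positivity

variable {A K γ}

theorem curveDist_pos (hV : curveVar K γ < curveDist A γ ^ 2 / 4) : 0 < curveDist A γ := by
  nlinarith [curveVar_nonneg K γ, curveDist_nonneg A γ]

theorem rMin_lt_half_curveDist (hV : curveVar K γ < curveDist A γ ^ 2 / 4) :
    rMin A K γ < curveDist A γ / 2 := by
  have : 0 < √(curveDist A γ ^ 2 / 4 - curveVar K γ) := Real.sqrt_pos.mpr (by linarith)
  rw [rMin]
  linarith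

theorem curveVar_lt_half_curveDist_mul_sub_rMin (hV : curveVar K γ < curveDist A γ ^ 2 / 4) :
    curveVar K γ < curveDist A γ / 2 * (curveDist A γ - rMin A K γ) := by
  have hs := Real.sqrt_pos.mpr (sub_pos.mpr hV)
  have hsq := Real.sq_sqrt (sub_pos.mpr hV).le
  rw [rMin]
  nlinarith [curveDist_nonneg A γ]

theorem norm_integral_le_mul_curveVar {F : Type*} [NormedAddCommGroup F] [NormedSpace ℝ F]
    (hγ : ContDiffOn ℝ 1 γ (Icc 0 1)) (hK : ContinuousOn (fun t => K (γ t)) (Icc 0 1))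
    {f : ℝ → F} {c : ℝ}
    (hf : ∀ t ∈ Icc (0 : ℝ) 1, ‖f t‖ ≤ c * (‖derivWithin γ (Icc 0 1) t‖ * ‖K (γ t)‖)) :
    ‖∫ t in (0 : ℝ)..1, f t‖ ≤ c * curveVar K γ := by
  have hint : IntervalIntegrable (fun t => c * (‖derivWithin γ (Icc 0 1) t‖ * ‖K (γ t)‖))
      volume 0 1 := by
    refine ContinuousOn.intervalIntegrable ?_
    rw [uIcc_of_le zero_le_one]
    exact continuousOn_const.mul
      ((hγ.continuousOn_derivWithin (uniqueDiffOn_Icc zero_lt_one) le_rfl).norm.mul hK.norm)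
  rw [curveVar, ← intervalIntegral.integral_const_mul]
  exact intervalIntegral.norm_integral_le_of_norm_le zero_le_one
    (.of_forall fun t ht => hf t (Ioc_subset_Icc_self ht)) hint

end Curve

theorem statement4_general (A : H →L[ℂ] H) (hA : IsSelfAdjoint A)
    (γ : ℝ → ℂ) (hγ : ContDiffOn ℝ 1 γ (Set.Icc 0 1))
    (K : ℂ → H →L[ℂ] H) (hK : ContinuousOn (fun t => K (γ t)) (Set.Icc 0 1))
    (hV : curveVar K γ < (curveDist A γ) ^ 2 / 4)
    (X : H →L[ℂ] H) (hXn : ‖X‖ ≤ rMin A K γ) :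
    ∀ z : ℂ, Metric.infDist z (spectrum ℂ A) ≤ curveDist A γ / 2 →
      IsUnit (Wfun K γ (A + X) z) := by
  intro z hz
  have := hA.isStarNormal
  set d := curveDist A γ
  set r := rMin A K γ
  have hr : r < d / 2 := rMin_lt_half_curveDist hV
  have hd : 0 < d := curveDist_pos hV
  have hbound : ∀ t ∈ Icc (0 : ℝ) 1, ‖(derivWithin γ (Icc 0 1) t * (γ t - z)⁻¹) •
      (K (γ t) ∘L Ring.inverse (A + X - γ t • 1))‖ ≤
      ((d / 2)⁻¹ * (d - r)⁻¹) * (‖derivWithin γ (Icc 0 1) t‖ * ‖K (γ t)‖) := by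
    intro t ht
    have hγz : ‖(γ t - z)⁻¹‖ ≤ (d / 2)⁻¹ := by
      rw [norm_inv]
      exact inv_anti₀ (by positivity) (half_curveDist_le_norm_sub A γ hz ht)
    have hres := (IsStarNormal.norm_ringInverse_add_sub_smul_one_le
      (curveDist_le_infDist A γ ht) hXn (by linarith)).2
    calc _ ≤ ‖derivWithin γ (Icc 0 1) t‖ * (d / 2)⁻¹ * (‖K (γ t)‖ * (d - r)⁻¹) := by
          rw [norm_smul, norm_mul]
          gcongr
          exact (K (γ t)).opNorm_comp_le _ |>.trans (by gcongr)
      _ = _ := by ring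
  have hlt : (d / 2)⁻¹ * (d - r)⁻¹ * curveVar K γ < 1 := by
    rw [← mul_inv, inv_mul_lt_iff₀ (mul_pos (by positivity) (by linarith)), mul_one]
    exact curveVar_lt_half_curveDist_mul_sub_rMin hV
  exact isUnit_one_sub_of_norm_lt_one
    ((norm_integral_le_mul_curveVar hγ hK hbound).trans_lt hlt)

/-- `W(z)` is boundedly invertible for `dist(z, σ(A)) ≤ d₀/2`. -/
theorem statement4 (A : H →L[ℂ] H) (hA : IsSelfAdjoint A)
    (γ : ℝ → ℂ) (hγ : ContDiffOn ℝ 1 γ (Set.Icc 0 1))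
    (hΓ : ∀ t ∈ Set.Icc (0:ℝ) 1, γ t ∉ spectrum ℂ A)
    (K : ℂ → H →L[ℂ] H) (hK : ContinuousOn (fun t => K (γ t)) (Set.Icc 0 1))
    (hV : curveVar K γ < (curveDist A γ) ^ 2 / 4)
    (X : H →L[ℂ] H) (hXn : ‖X‖ ≤ rMin A K γ)
    (hXσ : Disjoint (spectrum ℂ (A + X)) (γ '' Set.Icc (0:ℝ) 1))
    (hX : X = Vmap K γ (A + X)) :
    ∀ z : ℂ, Metric.infDist z (spectrum ℂ A) ≤ curveDist A γ / 2 →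
      IsUnit (Wfun K γ (A + X) z) :=
  statement4_general A hA γ hγ K hK hV X hXn
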